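/- Let F(i,j) be the double-recurrence Fibonacci numbers. Then for all m ∈ ℕ, 5·∑_{0 ≤ j ≤ i ≤ m} F(i,j) = 2·(m·L_{m+3} − L_{m+4} + 2·F_{m+2}) + 10, where L_k is the k-th Lucas number and F_k the k-th Fibonacci number. Equivalently, the sum of all double-recurrence Fibonacci numbers with indices on or below the main diagonal of the (m+1)×(m+1) square equals (2/5)(m·L_{m+3} − L_{m+4} + 2F_{m+2}) + 2. -/

import Mathlib

/-!
Splitting off the first two entries of row `n + 2` and applying the recurrence to the rest shows
that the row sums `R i = ∑_{j ≤ i} F(i,j)` satisfy `R (n+2) = R (n+1) + R n + F_{n+3} + F_n`.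
This forced Fibonacci recurrence is solved by `5 R i = 2 i L_{i+1} + 4 F_i`, and summing these
closed forms over the rows is a telescoping induction on `m`.
-/

/-- Double-recurrence Fibonacci numbers. -/
def dF : ℕ → ℕ → ℕ
  | m, 0 => Nat.fib m
  | m, 1 => Nat.fib (m + 1)
  | 0, n => Nat.fib n
  | 1, n => Nat.fib (n + 1)
  | m + 2, n + 2 => dF (m + 1) (n + 1) + dF m n


/-- Lucas numbers. -/
def luc : ℕ → ℕ
  | 0 => 2
  | 1 => 1
  | n + 2 => luc (n + 1) + luc n

open Finset

theorem luc_add_two (n : ℕ) : luc (n + 2) = luc (n + 1) + luc n := rfl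

theorem luc_succ_eq_fib_add_fib : ∀ n : ℕ, luc (n + 1) = Nat.fib n + Nat.fib (n + 2)
  | 0 => rfl
  | 1 => rfl
  | n + 2 => by
    rw [luc_add_two, luc_succ_eq_fib_add_fib n, luc_succ_eq_fib_add_fib (n + 1)]
    simp only [Nat.fib_add_two]
    ring

theorem dF_zero (m : ℕ) : dF m 0 = Nat.fib m := by
  rcases m with _ | _ | m <;> rfl

theorem dF_one (m : ℕ) : dF m 1 = Nat.fib (m + 1) := by
  rcases m with _ | _ | m <;> rfl

theorem dF_add_two_add_two (m n : ℕ) : dF (m + 2) (n + 2) = dF (m + 1) (n + 1) + dF m n := rfl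

def dFRowSum (i : ℕ) : ℕ := ∑ j ∈ range (i + 1), dF i j

theorem dFRowSum_succ (n : ℕ) :
    dFRowSum (n + 1) = Nat.fib (n + 1) + ∑ j ∈ range (n + 1), dF (n + 1) (j + 1) := by
  rw [dFRowSum, sum_range_succ', dF_zero, add_comm]

theorem dFRowSum_add_two (n : ℕ) :
    dFRowSum (n + 2) = dFRowSum (n + 1) + dFRowSum n + Nat.fib (n + 3) + Nat.fib n := by
  have inner : ∑ j ∈ range (n + 1), dF (n + 2) (j + 2) =
      ∑ j ∈ range (n + 1), dF (n + 1) (j + 1) + dFRowSum n := by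
    simp only [dF_add_two_add_two, sum_add_distrib, dFRowSum]
  rw [dFRowSum, sum_range_succ', sum_range_succ', inner, dF_one, dF_zero, dFRowSum_succ]
  simp only [Nat.fib_add_two]
  ring

theorem five_mul_dFRowSum : ∀ n : ℕ, 5 * dFRowSum n = 2 * n * luc (n + 1) + 4 * Nat.fib n
  | 0 => rfl
  | 1 => rfl
  | n + 2 => by
    have h₀ := five_mul_dFRowSum n
    have h₁ := five_mul_dFRowSum (n + 1)
    rw [dFRowSum_add_two]
    rw [luc_succ_eq_fib_add_fib] at h₀ h₁ ⊢
    simp only [Nat.fib_add_two] at h₀ h₁ ⊢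
    linear_combination h₀ + h₁

theorem stmt_10 : ∀ m : ℕ,
    5 * ∑ i ∈ Finset.range (m + 1), ∑ j ∈ Finset.range (i + 1), (dF i j : ℤ) =
      2 * ((m : ℤ) * luc (m + 3) - luc (m + 4) + 2 * Nat.fib (m + 2)) + 10 := by
  intro m
  induction m with
  | zero => decide
  | succ m ih =>
    have row : 5 * ∑ j ∈ range (m + 2), (dF (m + 1) j : ℤ) =
        2 * (m + 1) * luc (m + 2) + 4 * Nat.fib (m + 1) := by
      exact_mod_cast five_mul_dFRowSum (m + 1)
    rw [sum_range_succ, mul_add, ih, row]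
    simp only [luc_add_two, Nat.fib_add_two]
    push_cast
    ring
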